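/- arXiv:2405.16948 — 5 statements merged into one kernel-verified Lean document; each statement's English description precedes it below -/
import Mathlib

section
/- Let f ∈ Harm_d(n) and J ⊆ E = {1,...,n}. Define f^{(i)}(J) := ∑_{Z ∈ E_d, |J ∩ Z| = i} f(Z). Then for all 0 ≤ i ≤ d, f^{(i)}(J) = (-1)^{d-i} · C(d,i) · f̃(J), where f̃(J) = ∑_{Z ∈ E_d, Z ⊆ J} f(Z). -/
/-!
For `Y` of size `< d`, summing the harmonicity relation over the one-point extensions of `Y`
gives `d - |Y|` times the sum of `f` over the `d`-sets containing `Y`; by downward induction all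
these up-sums vanish. Hence `S_j := ∑_{Y ⊆ J, |Y| = j} ∑_{Z ⊇ Y} f(Z)` is `0` for `j < d`, while
`S_d = f̃(J)`. Double counting gives `S_j = ∑_i C(i, j) f^{(i)}(J)`, and binomial inversion
`f^{(i)}(J) = ∑_j (-1)^{j-i} C(j, i) S_j` leaves only the term `j = d`.
-/

open Finset

noncomputable section
open scoped Classical

/-- `f ∈ Harm_d(n)`: a function on `d`-subsets of `{1,…,n}` is harmonic if for every
`(d-1)`-subset `Y`, the sum of `f` over the `d`-subsets containing `Y` vanishes. -/
def IsHarmonic (n d : ℕ) (f : Finset (Fin n) → ℝ) : Prop :=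
  ∀ Y : Finset (Fin n), Y.card + 1 = d →
    ∑ Z ∈ (Finset.powersetCard d (Finset.univ : Finset (Fin n))).filter (fun Z => Y ⊆ Z), f Z = 0

/-- `f̃(X) = ∑_{Z ∈ E_d, Z ⊆ X} f(Z)`. -/
def tildeF {n : ℕ} (d : ℕ) (f : Finset (Fin n) → ℝ) (X : Finset (Fin n)) : ℝ :=
  ∑ Z ∈ Finset.powersetCard d X, f Z

theorem sum_range_neg_one_pow_mul_choose_of_le {R : Type*} [CommRing R] {m N : ℕ} (hm : m ≤ N) :
    ∑ k ∈ range (N + 1), (-1 : R) ^ k * m.choose k = if m = 0 then 1 else 0 := by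
  rw [← sum_subset (range_subset_range.2 (by omega : m + 1 ≤ N + 1)) fun k _ hk => by
    rw [Nat.choose_eq_zero_of_lt (by simpa using hk), Nat.cast_zero, mul_zero]]
  have hbinom := add_pow (-1 : R) 1 m
  simp only [neg_add_cancel, one_pow, mul_one] at hbinom
  rw [← hbinom, zero_pow_eq]

-- `j - i` truncates, which is harmless: `C(j, i) = 0` for `j < i`.
theorem sum_range_neg_one_pow_mul_choose_mul_choose {R : Type*} [CommRing R] {m i N : ℕ}
    (hm : m ≤ N) (hi : i ≤ N) :
    ∑ j ∈ range (N + 1), (-1 : R) ^ (j - i) * m.choose j * j.choose i =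
      if m = i then 1 else 0 := by
  obtain ⟨K, hK⟩ : ∃ K, N + 1 = i + K := ⟨N + 1 - i, by omega⟩
  have hlow : ∑ j ∈ range i, (-1 : R) ^ (j - i) * m.choose j * j.choose i = 0 :=
    sum_eq_zero fun j hj => by
      rw [Nat.choose_eq_zero_of_lt (mem_range.1 hj), Nat.cast_zero, mul_zero]
  have hshift : ∀ k, (-1 : R) ^ (i + k - i) * m.choose (i + k) * (i + k).choose i =
      m.choose i * ((-1) ^ k * (m - i).choose k) := by
    intro k
    rw [Nat.add_sub_cancel_left, mul_assoc, ← Nat.cast_mul, Nat.choose_mul (Nat.le_add_right i k),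
      Nat.add_sub_cancel_left]
    push_cast; ring
  rw [hK, sum_range_add, hlow, zero_add]
  simp_rw [hshift]
  rw [← mul_sum]
  rcases lt_or_ge m i with hmi | him
  · rw [Nat.choose_eq_zero_of_lt hmi, if_neg hmi.ne]; simp
  · rw [show K = (N - i) + 1 by omega, sum_range_neg_one_pow_mul_choose_of_le (by omega)]
    by_cases h : m = i
    · subst h; simp
    · rw [if_neg (by omega), if_neg h, mul_zero]

section UpSum

variable {α R : Type*} [Fintype α] [DecidableEq α] [CommSemiring R]

def upSum (d : ℕ) (f : Finset α → R) (Y : Finset α) : R :=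
  ∑ Z ∈ (powersetCard d (univ : Finset α)).filter (fun Z => Y ⊆ Z), f Z

theorem upSum_of_card_eq {d : ℕ} (f : Finset α → R) {Y : Finset α} (hY : #Y = d) :
    upSum d f Y = f Y := by
  have : (powersetCard d (univ : Finset α)).filter (fun Z => Y ⊆ Z) = {Y} := by
    ext Z
    simp only [mem_filter, mem_powersetCard, subset_univ, true_and, mem_singleton]
    exact ⟨fun ⟨hZ, hYZ⟩ => (eq_of_subset_of_card_le hYZ (by omega)).symm,
      fun h => ⟨h ▸ hY, h.ge⟩⟩
  rw [upSum, this, sum_singleton]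

theorem sum_compl_upSum_insert (d : ℕ) (f : Finset α → R) (Y : Finset α) :
    ∑ x ∈ Yᶜ, upSum d f (insert x Y) = ((d - #Y : ℕ) : R) * upSum d f Y := by
  simp only [upSum, sum_filter, mul_sum]
  rw [sum_comm]
  refine sum_congr rfl fun Z hZ => ?_
  rw [mem_powersetCard] at hZ
  simp only [insert_subset_iff]
  split_ifs with hYZ
  · simp only [hYZ, and_true]
    rw [sum_ite_mem, sum_const, nsmul_eq_mul, inter_comm, ← sdiff_eq_inter_compl,
      card_sdiff_of_subset hYZ, hZ.2]
  · simp [hYZ]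

theorem sum_powersetCard_upSum (d j : ℕ) (f : Finset α → R) (J : Finset α) :
    ∑ Y ∈ powersetCard j J, upSum d f Y =
      ∑ Z ∈ powersetCard d univ, ((#(J ∩ Z)).choose j : R) * f Z := by
  simp only [upSum, sum_filter]
  rw [sum_comm]
  refine sum_congr rfl fun Z _ => ?_
  rw [← sum_filter, sum_const, nsmul_eq_mul, ← card_powersetCard]
  congr 3
  ext Y
  simp only [mem_filter, mem_powersetCard, subset_inter_iff]
  tauto

end UpSum

theorem IsHarmonic.upSum_eq_zero {n d : ℕ} {f : Finset (Fin n) → ℝ} (hf : IsHarmonic n d f)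
    {Y : Finset (Fin n)} (hY : #Y < d) : upSum d f Y = 0 := by
  obtain ⟨k, hk⟩ : ∃ k, #Y + k + 1 = d := ⟨d - #Y - 1, by omega⟩
  induction k generalizing Y with
  | zero => exact hf Y hk
  | succ k ih =>
    have hsum := sum_compl_upSum_insert d f Y
    rw [sum_eq_zero fun x hx => ih (by rw [card_insert_of_notMem (mem_compl.1 hx)]; omega)
      (by rw [card_insert_of_notMem (mem_compl.1 hx)]; omega)] at hsum
    exact (mul_eq_zero.1 hsum.symm).resolve_left (by norm_cast; omega)

/-- Bachoc's lemma: `f^{(i)}(J) = (-1)^{d-i} C(d,i) f̃(J)` for `0 ≤ i ≤ d`, where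
`f^{(i)}(J) = ∑_{Z ∈ E_d, |J ∩ Z| = i} f(Z)`. -/
theorem stmt5 {n : ℕ} (d : ℕ) (f : Finset (Fin n) → ℝ) (hf : IsHarmonic n d f)
    (J : Finset (Fin n)) (i : ℕ) (hi : i ≤ d) :
    ∑ Z ∈ (Finset.powersetCard d (Finset.univ : Finset (Fin n))).filter
        (fun Z => (J ∩ Z).card = i), f Z =
      (-1 : ℝ) ^ (d - i) * (d.choose i : ℝ) * tildeF d f J := by
  calc ∑ Z ∈ (powersetCard d univ).filter (fun Z => #(J ∩ Z) = i), f Z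
      = ∑ Z ∈ powersetCard d univ,
          (∑ j ∈ range (d + 1), (-1 : ℝ) ^ (j - i) * (#(J ∩ Z)).choose j * j.choose i) *
            f Z := by
        rw [sum_filter]
        refine sum_congr rfl fun Z hZ => ?_
        have hJZ : #(J ∩ Z) ≤ d :=
          (card_le_card inter_subset_right).trans (mem_powersetCard.1 hZ).2.le
        rw [sum_range_neg_one_pow_mul_choose_mul_choose hJZ hi, ite_mul, one_mul, zero_mul]
    _ = ∑ j ∈ range (d + 1), (-1 : ℝ) ^ (j - i) * j.choose i *
          ∑ Y ∈ powersetCard j J, upSum d f Y := by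
        simp only [sum_powersetCard_upSum, sum_mul, mul_sum]
        rw [sum_comm]
        refine sum_congr rfl fun j _ => sum_congr rfl fun Z _ => by ring
    _ = (-1 : ℝ) ^ (d - i) * d.choose i * tildeF d f J := by
        rw [sum_range_succ, sum_eq_zero fun j hj => ?_, zero_add, tildeF]
        · exact congrArg _ (sum_congr rfl fun Y hY => upSum_of_card_eq f (mem_powersetCard.1 hY).2)
        · rw [sum_eq_zero fun Y hY => hf.upSum_eq_zero ((mem_powersetCard.1 hY).2.trans_lt
            (mem_range.1 hj)), mul_zero]
end
end

section
/- Let f ∈ Harm_d(n) and J ⊆ E = {1,...,n}. Then f̃(J) = (-1)^d · f̃(E \ J). In particular, if |J| < d or |J| > n - d, then f̃(J) = 0. -/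
open Finset

noncomputable section
open scoped Classical

/-!
Summing the harmonicity condition over the one-point extensions of a set `Y` gives
`(d - |Y|)` times the sum of `f` over the `d`-sets containing `Y`, so these superset sums vanish
for every `|Y| < d`, not only for `|Y| = d - 1`. By inclusion–exclusion,
`f̃(Jᶜ) = ∑_{Y ⊆ J} (-1)^|Y| ∑_{Z ⊇ Y} f(Z)`, and only the terms with `|Y| = d` survive,
leaving `(-1)^d f̃(J)`.
-/

variable {α M : Type*} [Fintype α] [DecidableEq α] [AddCommGroup M]

def supersetSum (d : ℕ) (f : Finset α → M) (Y : Finset α) : M :=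
  ∑ Z ∈ (powersetCard d univ).filter (Y ⊆ ·), f Z

lemma supersetSum_of_card_eq {d : ℕ} (f : Finset α → M) {Y : Finset α} (hY : #Y = d) :
    supersetSum d f Y = f Y := by
  have : (powersetCard d univ).filter (Y ⊆ ·) = {Y} := by
    ext Z
    simp only [mem_filter, mem_powersetCard, mem_singleton, subset_univ, true_and]
    constructor
    · rintro ⟨hZ, hYZ⟩
      exact (eq_of_subset_of_card_le hYZ (by omega)).symm
    · rintro rfl
      exact ⟨hY, subset_refl _⟩
  rw [supersetSum, this, sum_singleton]

lemma supersetSum_of_lt_card {d : ℕ} (f : Finset α → M) {Y : Finset α} (hY : d < #Y) :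
    supersetSum d f Y = 0 := by
  refine sum_eq_zero fun Z hZ => ?_
  obtain ⟨hZ, hYZ⟩ := mem_filter.1 hZ
  exact absurd (card_le_card hYZ) (by rw [(mem_powersetCard.1 hZ).2]; omega)

/-- Each `d`-set `Z ⊇ Y` is counted once for every `x ∈ Z \ Y`. -/
lemma sum_supersetSum_insert (d : ℕ) (f : Finset α → M) (Y : Finset α) :
    ∑ x ∈ Yᶜ, supersetSum d f (insert x Y) = (d - #Y) • supersetSum d f Y := by
  simp only [supersetSum, sum_filter, smul_sum]
  rw [sum_comm]
  refine sum_congr rfl fun Z hZ => ?_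
  by_cases hYZ : Y ⊆ Z
  · have : Yᶜ.filter (insert · Y ⊆ Z) = Z \ Y := by
      ext x
      simp [insert_subset_iff, hYZ, and_comm]
    rw [← sum_filter, this, sum_const, card_sdiff_of_subset hYZ, (mem_powersetCard.1 hZ).2,
      if_pos hYZ]
  · have (x : α) : ¬ insert x Y ⊆ Z := fun h => hYZ ((subset_insert x Y).trans h)
    simp [this, hYZ]

lemma supersetSum_eq_zero_of_card_lt [IsAddTorsionFree M] {d : ℕ} {f : Finset α → M}
    (hf : ∀ Y : Finset α, #Y + 1 = d → supersetSum d f Y = 0) {Y : Finset α} (hY : #Y < d) :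
    supersetSum d f Y = 0 := by
  obtain ⟨m, hm⟩ : ∃ m, #Y + (m + 1) = d := ⟨d - #Y - 1, by omega⟩
  induction m generalizing Y with
  | zero => exact hf Y hm
  | succ m ih =>
    have hsum : ∑ x ∈ Yᶜ, supersetSum d f (insert x Y) = 0 := by
      refine sum_eq_zero fun x hx => ?_
      have hcard : #(insert x Y) + (m + 1) = d := by
        rw [card_insert_of_notMem (mem_compl.1 hx)]; omega
      exact ih (by omega) hcard
    rw [sum_supersetSum_insert] at hsum
    exact (nsmul_eq_zero_iff_right (by omega)).1 hsum

/-- Inclusion–exclusion: `∑_{Y ⊆ J ∩ Z} (-1)^|Y|` is the indicator of `J ∩ Z = ∅`. -/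
lemma sum_powersetCard_compl (d : ℕ) (f : Finset α → M) (J : Finset α) :
    ∑ Z ∈ powersetCard d Jᶜ, f Z = ∑ Y ∈ J.powerset, (-1 : ℤ) ^ #Y • supersetSum d f Y := by
  have hcompl : powersetCard d Jᶜ = (powersetCard d univ).filter (fun Z => J ∩ Z = ∅) := by
    ext Z
    simp [subset_compl_iff_disjoint_right, disjoint_iff_inter_eq_empty, inter_comm, and_comm]
  calc ∑ Z ∈ powersetCard d Jᶜ, f Z
      = ∑ Z ∈ powersetCard d univ, (∑ Y ∈ (J ∩ Z).powerset, (-1 : ℤ) ^ #Y) • f Z := by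
        rw [hcompl, sum_filter]
        refine sum_congr rfl fun Z _ => ?_
        rw [sum_powerset_neg_one_pow_card]
        split_ifs <;> simp
    _ = ∑ Z ∈ powersetCard d univ, ∑ Y ∈ J.powerset, if Y ⊆ Z then (-1 : ℤ) ^ #Y • f Z else 0 := by
        refine sum_congr rfl fun Z _ => ?_
        rw [sum_smul, ← sum_filter]
        congr 1
        ext Y
        simp only [mem_filter, mem_powerset, subset_inter_iff]
    _ = _ := by
        rw [sum_comm]
        simp only [supersetSum, smul_sum, sum_filter, smul_ite, smul_zero]

theorem sum_powersetCard_compl_of_harmonic [IsAddTorsionFree M] {d : ℕ} {f : Finset α → M}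
    (hf : ∀ Y : Finset α, #Y + 1 = d → supersetSum d f Y = 0) (J : Finset α) :
    ∑ Z ∈ powersetCard d Jᶜ, f Z = (-1 : ℤ) ^ d • ∑ Z ∈ powersetCard d J, f Z := by
  have hvanish (Y : Finset α) (hY : Y ∈ J.powerset) (hYd : Y ∉ powersetCard d J) :
      (-1 : ℤ) ^ #Y • supersetSum d f Y = 0 := by
    have hne : #Y ≠ d := fun h => hYd (mem_powersetCard.2 ⟨mem_powerset.1 hY, h⟩)
    rcases hne.lt_or_gt with hlt | hgt
    · rw [supersetSum_eq_zero_of_card_lt hf hlt, smul_zero]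
    · rw [supersetSum_of_lt_card f hgt, smul_zero]
  calc ∑ Z ∈ powersetCard d Jᶜ, f Z
      = ∑ Y ∈ J.powerset, (-1 : ℤ) ^ #Y • supersetSum d f Y := sum_powersetCard_compl d f J
    _ = ∑ Y ∈ powersetCard d J, (-1 : ℤ) ^ #Y • supersetSum d f Y :=
        (sum_subset (fun Y hY => mem_powerset.2 (mem_powersetCard.1 hY).1) hvanish).symm
    _ = (-1 : ℤ) ^ d • ∑ Z ∈ powersetCard d J, f Z := by
        rw [smul_sum]
        refine sum_congr rfl fun Y hY => ?_
        rw [(mem_powersetCard.1 hY).2, supersetSum_of_card_eq f (mem_powersetCard.1 hY).2]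

/-- For `f ∈ Harm_d(n)`, `f̃(J) = (-1)^d f̃(E \ J)`; in particular `f̃(J) = 0` whenever
`|J| < d` or `|J| > n - d`. -/
theorem stmt6 {n : ℕ} (d : ℕ) (f : Finset (Fin n) → ℝ) (hf : IsHarmonic n d f)
    (J : Finset (Fin n)) :
    tildeF d f J = (-1 : ℝ) ^ d * tildeF d f (Finset.univ \ J) ∧
      ((J.card < d ∨ n - d < J.card) → tildeF d f J = 0) := by
  have hsymm : tildeF d f J = (-1 : ℝ) ^ d * tildeF d f (univ \ J) := by
    have := sum_powersetCard_compl_of_harmonic hf (univ \ J)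
    rwa [← compl_eq_univ_sdiff, compl_compl, zsmul_eq_mul, Int.cast_pow, Int.cast_neg,
      Int.cast_one] at this
  refine ⟨hsymm, fun hJ => ?_⟩
  rcases hJ with hlt | hgt
  · rw [tildeF, powersetCard_eq_empty.2 hlt, sum_empty]
  · have hcompl : #(univ \ J) < d := by
      have := card_le_univ J
      rw [← compl_eq_univ_sdiff, card_compl]
      rw [Fintype.card_fin] at *; omega
    rw [hsymm, tildeF, powersetCard_eq_empty.2 hcompl, sum_empty, mul_zero]
end
end

section
/- Let C be an [n,k] code over F_q and f ∈ Harm_d(n). With Z_{C,f}^{(r)}(x,y) := ∑_{i=d}^{n-d} A_{i,f}^{(r)}(C) x^{n-i-d} y^{i-d} and B_{t,f}^{(r)}(C) as above, we have Z_{C,f}^{(r)}(x,y) = (-1)^d · ∑_{t=d}^{n-d} B_{t,f}^{(r)}(C) (x-y)^{t-d} y^{n-t-d}. -/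
open Finset

noncomputable section
open scoped Classical

variable {n : ℕ}

instance (F : Type*) [Field F] [Fintype F] : Fintype (Submodule F (Fin n → F)) :=
  Fintype.ofFinite _

/-- `C(X)`, the subcode of codewords of `C` vanishing on `X`. -/
def codeVanish (F : Type*) [Field F] [Fintype F] (C : Submodule F (Fin n → F))
    (X : Finset (Fin n)) : Submodule F (Fin n → F) :=
  C ⊓ Submodule.pi (X : Set (Fin n)) (fun _ => ⊥)

/-- `ℓ(X) = dim C(X)`. -/
def ellDim (F : Type*) [Field F] [Fintype F] (C : Submodule F (Fin n → F))
    (X : Finset (Fin n)) : ℕ :=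
  Module.finrank F ↥(codeVanish F C X)

/-- `Supp(D)`, the support of a subcode `D`. -/
def codeSupp (F : Type*) [Field F] [Fintype F] (D : Submodule F (Fin n → F)) :
    Finset (Fin n) :=
  Finset.univ.filter (fun i => ∃ u ∈ D, u i ≠ 0)

/-- The number of `r`-dimensional subspaces of the code `C`. -/
def subCount (F : Type*) [Field F] [Fintype F] (C : Submodule F (Fin n → F)) (r : ℕ) : ℕ :=
  (Finset.univ.filter (fun D : Submodule F (Fin n → F) =>
    D ≤ C ∧ Module.finrank F ↥D = r)).card

/-- `A_{i,f}^{(r)}(C) = ∑_{D ∈ D_r(C), wt(D) = i} f̃(Supp D)`. -/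
def Ahigher (F : Type*) [Field F] [Fintype F] (C : Submodule F (Fin n → F))
    (f : Finset (Fin n) → ℝ) (d r i : ℕ) : ℝ :=
  ∑ D ∈ Finset.univ.filter (fun D : Submodule F (Fin n → F) =>
      D ≤ C ∧ Module.finrank F ↥D = r ∧ (codeSupp F D).card = i),
    tildeF d f (codeSupp F D)

/-- `B_{t,f}^{(r)}(C) = ∑_{X ∈ E_t} f̃(X) · B_X^{(r)}(C)`. -/
def Bhigher (F : Type*) [Field F] [Fintype F] (C : Submodule F (Fin n → F))
    (f : Finset (Fin n) → ℝ) (d r t : ℕ) : ℝ :=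
  ∑ X ∈ Finset.powersetCard t (Finset.univ : Finset (Fin n)),
    tildeF d f X * (subCount F (codeVanish F C X) r : ℝ)

/-- `Z_{C,f}^{(r)}(x,y) = ∑_{i=d}^{n-d} A_{i,f}^{(r)}(C) x^{n-i-d} y^{i-d}`. -/
def Zhigher (F : Type*) [Field F] [Fintype F] (C : Submodule F (Fin n → F))
    (f : Finset (Fin n) → ℝ) (d r : ℕ) (x y : ℝ) : ℝ :=
  ∑ i ∈ Finset.Icc d (n - d), Ahigher F C f d r i * x ^ (n - i - d) * y ^ (i - d)

/-- The dual code `C⊥`. -/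
def dualCode (F : Type*) [Field F] [Fintype F] (C : Submodule F (Fin n → F)) :
    Submodule F (Fin n → F) where
  carrier := {u | ∀ v ∈ C, ∑ i, u i * v i = 0}
  add_mem' := by
    intro a b ha hb v hv
    simp only [Set.mem_setOf_eq] at *
    simp [Pi.add_apply, add_mul, Finset.sum_add_distrib, ha v hv, hb v hv]
  zero_mem' := by intro v hv; simp
  smul_mem' := by
    intro c a ha v hv
    simp only [Set.mem_setOf_eq] at *
    simp [smul_eq_mul, mul_assoc, ← Finset.mul_sum, ha v hv]

/-- The extension code `C ⊗ F_{q^m}`, i.e. the `K`-span of (the embedding of) `C`. -/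
def extCode (F : Type*) [Field F] [Fintype F] (K : Type*) [CommRing K] [Algebra F K]
    (C : Submodule F (Fin n → F)) : Submodule K (Fin n → K) :=
  Submodule.span K
    ((fun (u : Fin n → F) (j : Fin n) => algebraMap F K (u j)) '' (C : Set (Fin n → F)))

/-- The support of a vector. -/
def vsupp {n : ℕ} {K : Type*} [CommRing K] (u : Fin n → K) : Finset (Fin n) :=
  Finset.univ.filter (fun j => u j ≠ 0)

/-- `A_{i,f}^{q^m}(C) = ∑_{u ∈ C[q^m], wt(u) = i} f̃(supp u)`. -/
def Aext (F : Type*) [Field F] [Fintype F] (K : Type*) [CommRing K] [Fintype K] [Algebra F K]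
    (C : Submodule F (Fin n → F)) (f : Finset (Fin n) → ℝ) (d i : ℕ) : ℝ :=
  ∑ u ∈ Finset.univ.filter (fun u : Fin n → K =>
      u ∈ extCode F K C ∧ (vsupp u).card = i),
    tildeF d f (vsupp u)

/-- `Z_{C,f}(x,y;q^m) = ∑_{i=d}^{n-d} A_{i,f}^{q^m}(C) x^{n-i-d} y^{i-d}`. -/
def Zext (F : Type*) [Field F] [Fintype F] (K : Type*) [CommRing K] [Fintype K] [Algebra F K]
    (C : Submodule F (Fin n → F)) (f : Finset (Fin n) → ℝ) (d : ℕ) (x y : ℝ) : ℝ :=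
  ∑ i ∈ Finset.Icc d (n - d), Aext F K C f d i * x ^ (n - i - d) * y ^ (i - d)

/-!
Write `S_D` for the support of a subcode `D`. A subcode `D` lies in `C(X)` exactly when `X`
avoids `S_D`, so `B_t` collects, over `D ∈ D_r(C)`, the sums of `f̃` over the `t`-sets disjoint
from `S_D`. Double counting turns such a sum into `C(n - |S_D| - d, t - d)` times the sum of `f`
over the `d`-sets disjoint from `S_D`, and for harmonic `f` inclusion–exclusion evaluates the
latter as `(-1)^d f̃(S_D)`. The binomial theorem then collapses the sum over `t` to
`x^(n - |S_D| - d) y^(|S_D| - d)`, while `f̃(S_D) = 0` unless `d ≤ |S_D| ≤ n - d`.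
-/

lemma Finset.card_filter_powersetCard_superset {α : Type*} [DecidableEq α] {Z T : Finset α}
    {t : ℕ} (hZT : Z ⊆ T) (hZt : #Z ≤ t) :
    #((powersetCard t T).filter (Z ⊆ ·)) = (#T - #Z).choose (t - #Z) := by
  rw [← card_sdiff_of_subset hZT, ← card_powersetCard]
  refine card_nbij' (· \ Z) (· ∪ Z) (fun X hX => ?_) (fun V hV => ?_)
    (fun X hX => ?_) (fun V hV => ?_)
  all_goals simp only [mem_coe, mem_filter, mem_powersetCard, subset_sdiff] at *
  · exact ⟨⟨sdiff_subset.trans hX.1.1, sdiff_disjoint⟩,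
      by rw [card_sdiff_of_subset hX.2, hX.1.2]⟩
  · refine ⟨⟨union_subset hV.1.1 hZT, ?_⟩, subset_union_right⟩
    rw [card_union_of_disjoint hV.1.2, hV.2]
    omega
  · exact sdiff_union_of_subset hX.2
  · exact union_sdiff_cancel_right hV.1.2

lemma Finset.sum_powersetCard_sum_powersetCard {α M : Type*} [DecidableEq α] [AddCommMonoid M]
    (T : Finset α) {d t : ℕ} (hdt : d ≤ t) (g : Finset α → M) :
    ∑ X ∈ powersetCard t T, ∑ Z ∈ powersetCard d X, g Z =
      (#T - d).choose (t - d) • ∑ Z ∈ powersetCard d T, g Z := by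
  rw [sum_comm' (t' := powersetCard d T) (s' := fun Z => (powersetCard t T).filter (Z ⊆ ·)),
    smul_sum]
  · refine sum_congr rfl fun Z hZ => ?_
    obtain ⟨hZT, hZd⟩ := mem_powersetCard.mp hZ
    rw [sum_const, card_filter_powersetCard_superset hZT (hZd ▸ hdt), hZd]
  · intro X Z
    simp only [mem_powersetCard, mem_filter]
    constructor
    · rintro ⟨⟨hXT, hXt⟩, hZX, hZd⟩
      exact ⟨⟨⟨hXT, hXt⟩, hZX⟩, hZX.trans hXT, hZd⟩
    · rintro ⟨⟨⟨hXT, hXt⟩, hZX⟩, -, hZd⟩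
      exact ⟨⟨hXT, hXt⟩, hZX, hZd⟩

lemma sum_range_choose_mul_sub_pow {R : Type*} [CommRing R] (x y : R) {m N : ℕ} (hmN : m ≤ N) :
    ∑ j ∈ range (N + 1), (m.choose j : R) * (x - y) ^ j * y ^ (N - j) = x ^ m * y ^ (N - m) := by
  have hbinom := add_pow (x - y) y m
  rw [sub_add_cancel] at hbinom
  rw [hbinom, sum_mul, ← sum_subset (range_subset_range.mpr (by omega : m + 1 ≤ N + 1))]
  · refine sum_congr rfl fun j hj => ?_
    rw [show N - j = (m - j) + (N - m) by have := mem_range.mp hj; omega, pow_add]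
    ring
  · intro j _ hj
    rw [Nat.choose_eq_zero_of_lt (by simpa using hj), Nat.cast_zero, zero_mul, zero_mul]

lemma Finset.sum_sum_filter_insert_subset {α : Type*} [Fintype α] [DecidableEq α] {d : ℕ}
    (f : Finset α → ℝ) (W : Finset α) :
    ∑ a ∈ Wᶜ, ∑ Z ∈ (powersetCard d univ).filter (insert a W ⊆ ·), f Z =
      ∑ Z ∈ (powersetCard d univ).filter (W ⊆ ·), (#(Z \ W) : ℝ) * f Z := by
  simp only [sum_filter]
  rw [sum_comm]
  refine sum_congr rfl fun Z _ => ?_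
  simp only [insert_subset_iff]
  split_ifs with hWZ
  · rw [← sum_filter, sum_const, nsmul_eq_mul]
    congr 3
    ext a
    simp [hWZ, and_comm]
  · simp [hWZ]

lemma Finset.ite_disjoint_eq_sum_neg_one_pow {α : Type*} [DecidableEq α] (Z S : Finset α) :
    (if Disjoint Z S then (1 : ℝ) else 0) =
      ∑ W ∈ S.powerset.filter (· ⊆ Z), (-1 : ℝ) ^ #W := by
  have hW : S.powerset.filter (· ⊆ Z) = (Z ∩ S).powerset := by
    ext W
    simp only [mem_filter, mem_powerset, subset_inter_iff]
    tauto
  have h := sum_powerset_neg_one_pow_card (x := Z ∩ S)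
  simp only [← disjoint_iff_inter_eq_empty] at h
  rw [hW]
  exact_mod_cast h.symm

namespace IsHarmonic

variable {d : ℕ} {f : Finset (Fin n) → ℝ}

lemma sum_superset_eq_zero_of_card_lt (hf : IsHarmonic n d f) {W : Finset (Fin n)}
    (hW : #W < d) : ∑ Z ∈ (powersetCard d univ).filter (W ⊆ ·), f Z = 0 := by
  obtain ⟨k, hk⟩ : ∃ k, #W + k + 1 = d := ⟨d - #W - 1, by omega⟩
  induction k generalizing W with
  | zero => exact hf W hk
  | succ k ih =>
    have hins : ∀ a ∈ Wᶜ, ∑ Z ∈ (powersetCard d univ).filter (insert a W ⊆ ·), f Z = 0 :=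
      fun a ha => ih (by rw [card_insert_of_notMem (by simpa using ha)]; omega)
        (by rw [card_insert_of_notMem (by simpa using ha)]; omega)
    have hcount : ∀ Z ∈ (powersetCard d univ).filter (W ⊆ ·),
        (#(Z \ W) : ℝ) * f Z = (d - #W : ℕ) * f Z := fun Z hZ => by
      simp only [mem_filter, mem_powersetCard] at hZ
      rw [card_sdiff_of_subset hZ.2, hZ.1.2]
    have := sum_sum_filter_insert_subset (d := d) f W
    rw [sum_eq_zero hins, sum_congr rfl hcount, ← mul_sum] at this
    exact (mul_eq_zero.mp this.symm).resolve_left (by norm_cast; omega)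

lemma sum_superset (hf : IsHarmonic n d f) (W : Finset (Fin n)) :
    ∑ Z ∈ (powersetCard d univ).filter (W ⊆ ·), f Z = if #W = d then f W else 0 := by
  rcases lt_trichotomy #W d with hlt | heq | hgt
  · rw [hf.sum_superset_eq_zero_of_card_lt hlt, if_neg hlt.ne]
  · rw [if_pos heq]
    convert sum_singleton f W
    ext Z
    simp only [mem_filter, mem_powersetCard, mem_singleton]
    refine ⟨fun h => (eq_of_subset_of_card_le h.2 (by omega)).symm, ?_⟩
    rintro rfl
    exact ⟨⟨subset_univ _, heq⟩, subset_rfl⟩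
  · rw [if_neg hgt.ne', sum_eq_zero]
    intro Z hZ
    simp only [mem_filter, mem_powersetCard] at hZ
    exact absurd (card_le_card hZ.2) (by omega)

/-- Inclusion–exclusion over the subsets `W ⊆ S ∩ Z`; by `sum_superset` only `#W = d` survives. -/
lemma sum_disjoint (hf : IsHarmonic n d f) (S : Finset (Fin n)) :
    ∑ Z ∈ (powersetCard d univ).filter (Disjoint · S), f Z = (-1) ^ d * tildeF d f S := by
  calc ∑ Z ∈ (powersetCard d univ).filter (Disjoint · S), f Z
      = ∑ Z ∈ powersetCard d univ, ∑ W ∈ S.powerset, if W ⊆ Z then (-1) ^ #W * f Z else 0 := by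
        rw [sum_filter]
        refine sum_congr rfl fun Z _ => ?_
        rw [← boole_mul, ite_disjoint_eq_sum_neg_one_pow, sum_mul, sum_filter]
    _ = ∑ W ∈ S.powerset, (-1) ^ #W * if #W = d then f W else 0 := by
        rw [sum_comm]
        refine sum_congr rfl fun W _ => ?_
        rw [← hf.sum_superset, mul_sum, sum_filter]
    _ = (-1) ^ d * tildeF d f S := by
        rw [tildeF, powersetCard_eq_filter, sum_filter, mul_sum]
        refine sum_congr rfl fun W _ => ?_
        split_ifs with h <;> simp [h]

lemma tildeF_eq_zero_of_notMem_Icc (hf : IsHarmonic n d f) {S : Finset (Fin n)}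
    (hS : #S ∉ Icc d (n - d)) : tildeF d f S = 0 := by
  rcases (not_and_or.mp (mem_Icc.not.mp hS)) with hlt | hgt
  · rw [tildeF, powersetCard_eq_empty.mpr (by omega), sum_empty]
  · have hempty : (powersetCard d univ).filter (Disjoint · S) = ∅ := by
      refine filter_eq_empty_iff.mpr fun Z hZ hZS => ?_
      have := card_le_card (subset_compl_iff_disjoint_right.mpr hZS)
      rw [card_compl, Fintype.card_fin, (mem_powersetCard.mp hZ).2] at this
      have := card_le_univ S
      rw [Fintype.card_fin] at this
      omega
    have := hf.sum_disjoint S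
    rw [hempty, sum_empty] at this
    simpa using this.symm

end IsHarmonic

lemma sum_tildeF_disjoint {d t : ℕ} (hdt : d ≤ t) (f : Finset (Fin n) → ℝ)
    (S : Finset (Fin n)) :
    ∑ X ∈ (powersetCard t univ).filter (Disjoint · S), tildeF d f X =
      (n - #S - d).choose (t - d) * ∑ Z ∈ (powersetCard d univ).filter (Disjoint · S), f Z := by
  have hcompl : ∀ k, (powersetCard k univ).filter (Disjoint · S) = powersetCard k Sᶜ := by
    intro k
    ext X
    simp [subset_compl_iff_disjoint_right, and_comm]
  simp only [hcompl, tildeF]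
  rw [sum_powersetCard_sum_powersetCard _ hdt, card_compl, Fintype.card_fin, nsmul_eq_mul]

lemma sum_Icc_choose_mul_sub_pow {R : Type*} [CommRing R] (x y : R) {d s : ℕ}
    (hs : s ∈ Icc d (n - d)) :
    ∑ t ∈ Icc d (n - d), ((n - s - d).choose (t - d) : R) * (x - y) ^ (t - d) * y ^ (n - t - d) =
      x ^ (n - s - d) * y ^ (s - d) := by
  obtain ⟨hds, hsn⟩ := mem_Icc.mp hs
  rw [← Ico_add_one_right_eq_Icc, sum_Ico_eq_sum_range,
    show n - d + 1 - d = n - d - d + 1 by omega,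
    show s - d = (n - d - d) - (n - s - d) by omega,
    ← sum_range_choose_mul_sub_pow x y (by omega : n - s - d ≤ n - d - d)]
  refine sum_congr rfl fun j _ => ?_
  rw [show d + j - d = j by omega, show n - (d + j) - d = n - d - d - j by omega]

lemma IsHarmonic.tildeF_mul_sum_choose {d : ℕ} {f : Finset (Fin n) → ℝ} (hf : IsHarmonic n d f)
    (S : Finset (Fin n)) (x y : ℝ) :
    tildeF d f S * ∑ t ∈ Icc d (n - d),
        ((n - #S - d).choose (t - d) : ℝ) * (x - y) ^ (t - d) * y ^ (n - t - d) =
      tildeF d f S * (x ^ (n - #S - d) * y ^ (#S - d)) := by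
  by_cases hS : #S ∈ Icc d (n - d)
  · rw [sum_Icc_choose_mul_sub_pow x y hS]
  · rw [hf.tildeF_eq_zero_of_notMem_Icc hS, zero_mul, zero_mul]

section Subcodes

variable (F : Type*) [Field F] [Fintype F]

/-- `D_r(C)`. -/
def subcodesOfRank (C : Submodule F (Fin n → F)) (r : ℕ) : Finset (Submodule F (Fin n → F)) :=
  univ.filter fun D => D ≤ C ∧ Module.finrank F D = r

lemma le_codeVanish_iff {C D : Submodule F (Fin n → F)} {X : Finset (Fin n)} :
    D ≤ codeVanish F C X ↔ D ≤ C ∧ Disjoint (codeSupp F D) X := by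
  rw [codeVanish, le_inf_iff]
  simp only [disjoint_left, codeSupp, mem_filter, mem_univ, true_and, SetLike.le_def,
    Submodule.mem_pi, mem_coe, Submodule.mem_bot]
  refine and_congr_right fun _ => ⟨fun hX i ⟨u, hu, hui⟩ hi => hui (hX hu i hi),
    fun hX u hu i hi => by_contra fun hui => hX ⟨u, hu, hui⟩ hi⟩

lemma subCount_codeVanish (C : Submodule F (Fin n → F)) (X : Finset (Fin n)) (r : ℕ) :
    subCount F (codeVanish F C X) r =
      #((subcodesOfRank F C r).filter fun D => Disjoint (codeSupp F D) X) := by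
  simp only [subCount, subcodesOfRank, filter_filter, le_codeVanish_iff, and_assoc]
  congr 2
  ext D
  tauto

variable {F}

lemma Bhigher_eq {C : Submodule F (Fin n → F)} {f : Finset (Fin n) → ℝ} {d r t : ℕ}
    (hf : IsHarmonic n d f) (hdt : d ≤ t) :
    Bhigher F C f d r t = (-1) ^ d * ∑ D ∈ subcodesOfRank F C r,
      ((n - #(codeSupp F D) - d).choose (t - d) : ℝ) * tildeF d f (codeSupp F D) := by
  calc Bhigher F C f d r t
      = ∑ D ∈ subcodesOfRank F C r,
          ∑ X ∈ (powersetCard t univ).filter (Disjoint · (codeSupp F D)), tildeF d f X := by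
        simp only [Bhigher, subCount_codeVanish, card_filter, Nat.cast_sum, Nat.cast_ite,
          Nat.cast_one, Nat.cast_zero, mul_sum, mul_boole]
        rw [sum_comm]
        simp only [sum_filter, disjoint_comm]
    _ = _ := by
        simp only [sum_tildeF_disjoint hdt, hf.sum_disjoint, mul_sum]
        exact sum_congr rfl fun D _ => by ring

lemma IsHarmonic.sum_Ahigher_mul {C : Submodule F (Fin n → F)} {f : Finset (Fin n) → ℝ}
    {d : ℕ} (hf : IsHarmonic n d f) (r : ℕ) (w : ℕ → ℝ) :
    ∑ i ∈ Icc d (n - d), Ahigher F C f d r i * w i =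
      ∑ D ∈ subcodesOfRank F C r, tildeF d f (codeSupp F D) * w #(codeSupp F D) := by
  have hA : ∀ i, Ahigher F C f d r i * w i = ∑ D ∈ (subcodesOfRank F C r).filter
      (fun D => #(codeSupp F D) = i), tildeF d f (codeSupp F D) * w #(codeSupp F D) := by
    intro i
    simp only [Ahigher, subcodesOfRank, filter_filter, and_assoc, sum_mul]
    exact sum_congr rfl fun D hD => by rw [(mem_filter.mp hD).2.2.2]
  simp only [hA]
  rw [sum_fiberwise_eq_sum_filter]
  refine sum_filter_of_ne fun D _ hD => ?_
  by_contra hS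
  exact hD (by rw [hf.tildeF_eq_zero_of_notMem_Icc hS, zero_mul])

end Subcodes

theorem stmt8_general {n : ℕ} (F : Type*) [Field F] [Fintype F] (C : Submodule F (Fin n → F))
    (f : Finset (Fin n) → ℝ) (d r : ℕ) (hf : IsHarmonic n d f) :
    ∀ x y : ℝ,
      Zhigher F C f d r x y =
        (-1 : ℝ) ^ d *
          ∑ t ∈ Finset.Icc d (n - d),
            Bhigher F C f d r t * (x - y) ^ (t - d) * y ^ (n - t - d) := by
  intro x y
  have hsign : (-1 : ℝ) ^ d * (-1) ^ d = 1 := by rw [← mul_pow]; norm_num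
  calc Zhigher F C f d r x y
      = ∑ D ∈ subcodesOfRank F C r, tildeF d f (codeSupp F D) *
          (x ^ (n - #(codeSupp F D) - d) * y ^ (#(codeSupp F D) - d)) := by
        simp only [Zhigher, mul_assoc]
        exact hf.sum_Ahigher_mul r fun i => x ^ (n - i - d) * y ^ (i - d)
    _ = ∑ D ∈ subcodesOfRank F C r, tildeF d f (codeSupp F D) * ∑ t ∈ Icc d (n - d),
          ((n - #(codeSupp F D) - d).choose (t - d) : ℝ) * (x - y) ^ (t - d) * y ^ (n - t - d) :=
        sum_congr rfl fun D _ => (hf.tildeF_mul_sum_choose _ x y).symm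
    _ = _ := by
        simp only [mul_sum]
        rw [sum_comm]
        refine sum_congr rfl fun t ht => ?_
        rw [Bhigher_eq hf (mem_Icc.mp ht).1, mul_sum, sum_mul, sum_mul, mul_sum]
        refine sum_congr rfl fun D _ => ?_
        linear_combination (-(((n - #(codeSupp F D) - d).choose (t - d) : ℝ)
          * tildeF d f (codeSupp F D) * (x - y) ^ (t - d) * y ^ (n - t - d))) * hsign

/-- `Z_{C,f}^{(r)}(x,y) = (-1)^d ∑_{t=d}^{n-d} B_{t,f}^{(r)}(C) (x-y)^{t-d} y^{n-t-d}`. -/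
theorem stmt8 {n : ℕ} (F : Type*) [Field F] [Fintype F] (C : Submodule F (Fin n → F))
    (f : Finset (Fin n) → ℝ) (d r : ℕ) (hd : 1 ≤ d) (hf : IsHarmonic n d f)
    (hr : r ≤ Module.finrank F ↥C) :
    ∀ x y : ℝ,
      Zhigher F C f d r x y =
        (-1 : ℝ) ^ d *
          ∑ t ∈ Finset.Icc d (n - d),
            Bhigher F C f d r t * (x - y) ^ (t - d) * y ^ (n - t - d) :=
  stmt8_general F C f d r hf
end
end

section
/- Let M be a matroid on E = {1,...,n} with rank function ρ, and f ∈ Harm_d(n) with d ≥ 1. Define the harmonic Tutte polynomial T(M,f;x,y) := ∑_{X ⊆ E} f̃(X)(x-1)^{ρ(E)-ρ(X)}(y-1)^{|X|-ρ(X)}. Then T(M*,f;x,y) = (-1)^d · T(M,f;y,x), where M* is the dual matroid. -/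
open Finset

noncomputable section
open scoped Classical

/-- The harmonic Tutte polynomial of a matroid given by its rank function `ρ`:
`T(M,f;x,y) = ∑_{X ⊆ E} f̃(X) (x-1)^{ρ(E)-ρ(X)} (y-1)^{|X|-ρ(X)}`. -/
def harmTutte {n : ℕ} (ρ : Finset (Fin n) → ℕ) (d : ℕ) (f : Finset (Fin n) → ℝ)
    (x y : ℝ) : ℝ :=
  ∑ X ∈ (Finset.univ : Finset (Fin n)).powerset,
    tildeF d f X * (x - 1) ^ (ρ Finset.univ - ρ X) * (y - 1) ^ (X.card - ρ X)

/-- The rank function of the dual matroid: `ρ*(X) = |X| + ρ(E \ X) - ρ(E)`. -/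
def dualRank {n : ℕ} (ρ : Finset (Fin n) → ℕ) (X : Finset (Fin n)) : ℕ :=
  X.card + ρ (Finset.univ \ X) - ρ Finset.univ

/-!
Iterating the harmonicity of `f` by double counting shows that `∑_{Z ⊇ S, |Z| = d} f(Z)`
vanishes whenever `|S| < d`, so inclusion–exclusion over `Z ∩ X` gives
`f̃(E \ X) = (-1)^d f̃(X)`. Substituting `X ↦ E \ X` in `T(M*, f; x, y)` then turns the
exponents of the dual rank function into those of `ρ` with `x` and `y` exchanged.
-/

namespace HarmonicTutte

variable {n : ℕ}

def sumAbove (d : ℕ) (f : Finset (Fin n) → ℝ) (S : Finset (Fin n)) : ℝ :=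
  ∑ Z ∈ (powersetCard d univ).filter (fun Z => S ⊆ Z), f Z

lemma sum_sumAbove_insert (d : ℕ) (f : Finset (Fin n) → ℝ) (S : Finset (Fin n)) :
    ∑ e ∈ univ \ S, sumAbove d f (insert e S) = ((d - S.card : ℕ) : ℝ) * sumAbove d f S := by
  have hcount : ∀ Z ∈ (powersetCard d univ).filter (fun Z => S ⊆ Z),
      ∑ e ∈ univ \ S, (if e ∈ Z then f Z else 0) = ((d - S.card : ℕ) : ℝ) * f Z := by
    intro Z hZ
    obtain ⟨hZcard, hSZ⟩ := mem_filter.mp hZ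
    have hinter : (univ \ S) ∩ Z = Z \ S := by ext; simp [and_comm]
    rw [sum_ite_mem, sum_const, nsmul_eq_mul, hinter, card_sdiff_of_subset hSZ,
      (mem_powersetCard.mp hZcard).2]
  have hsplit : ∀ e, sumAbove d f (insert e S) =
      ∑ Z ∈ (powersetCard d univ).filter (fun Z => S ⊆ Z), if e ∈ Z then f Z else 0 := by
    intro e
    rw [sumAbove, ← sum_filter, filter_filter]
    simp only [insert_subset_iff, and_comm]
  simp only [hsplit]
  rw [sum_comm, sumAbove, mul_sum]
  exact sum_congr rfl hcount

lemma sumAbove_eq_zero_of_card_lt {d : ℕ} {f : Finset (Fin n) → ℝ} (hf : IsHarmonic n d f)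
    {S : Finset (Fin n)} (hS : S.card < d) : sumAbove d f S = 0 := by
  induction h : d - S.card generalizing S with
  | zero => omega
  | succ k ih =>
    rcases eq_or_lt_of_le (Nat.succ_le_of_lt hS) with hlast | hlt
    · exact hf S hlast
    have hinsert : ∀ e ∈ univ \ S, sumAbove d f (insert e S) = 0 := fun e he => by
      have hcard := card_insert_of_notMem (mem_sdiff.mp he).2
      exact ih (by omega) (by omega)
    have hsum := sum_sumAbove_insert d f S
    rw [sum_eq_zero hinsert, eq_comm, mul_eq_zero] at hsum
    exact hsum.resolve_left (by norm_cast; omega)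

lemma sumAbove_eq_ite {d : ℕ} {f : Finset (Fin n) → ℝ} (hf : IsHarmonic n d f)
    (S : Finset (Fin n)) : sumAbove d f S = if S.card = d then f S else 0 := by
  rcases lt_trichotomy S.card d with hlt | heq | hgt
  · rw [if_neg hlt.ne, sumAbove_eq_zero_of_card_lt hf hlt]
  · have hsingle : (powersetCard d univ).filter (fun Z => S ⊆ Z) = {S} := by
      ext Z
      simp only [mem_filter, mem_powersetCard, mem_singleton, subset_univ, true_and]
      exact ⟨fun ⟨hZ, hSZ⟩ => (eq_of_subset_of_card_le hSZ (by omega)).symm,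
        fun hZ => by subst hZ; exact ⟨heq, subset_rfl⟩⟩
    rw [if_pos heq, sumAbove, hsingle, sum_singleton]
  · rw [if_neg hgt.ne', sumAbove, sum_eq_zero]
    intro Z hZ
    obtain ⟨hZcard, hSZ⟩ := mem_filter.mp hZ
    have := card_le_card hSZ
    have := (mem_powersetCard.mp hZcard).2
    omega

lemma tildeF_univ_sdiff {d : ℕ} {f : Finset (Fin n) → ℝ} (hf : IsHarmonic n d f)
    (Y : Finset (Fin n)) : tildeF d f (univ \ Y) = (-1) ^ d * tildeF d f Y := by
  calc tildeF d f (univ \ Y)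
      = ∑ Z ∈ powersetCard d univ, if Z ∩ Y = ∅ then f Z else 0 := by
        rw [tildeF, ← sum_filter]
        congr 1
        ext Z
        simp [subset_sdiff, disjoint_iff_inter_eq_empty, and_comm]
    _ = ∑ Z ∈ powersetCard d univ,
          ∑ S ∈ Y.powerset, if S ⊆ Z then (-1) ^ S.card * f Z else 0 := by
        refine sum_congr rfl fun Z _ => ?_
        have hsub : Y.powerset.filter (fun S => S ⊆ Z) = (Z ∩ Y).powerset := by
          ext S
          simp only [mem_filter, mem_powerset, subset_inter_iff]
          tauto
        have hsign :
            ∑ S ∈ (Z ∩ Y).powerset, (-1 : ℝ) ^ S.card = if Z ∩ Y = ∅ then 1 else 0 := by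
          exact_mod_cast congrArg (Int.cast : ℤ → ℝ) sum_powerset_neg_one_pow_card
        rw [← sum_filter, hsub, ← sum_mul, hsign, ite_mul, one_mul, zero_mul]
    _ = ∑ S ∈ Y.powerset, (-1) ^ S.card * sumAbove d f S := by
        rw [sum_comm]
        simp only [sumAbove, sum_filter, mul_sum, mul_ite, mul_zero]
    _ = ∑ S ∈ Y.powerset, if S.card = d then (-1) ^ d * f S else 0 := by
        refine sum_congr rfl fun S _ => ?_
        rw [sumAbove_eq_ite hf]
        split_ifs with h <;> simp [h]
    _ = (-1) ^ d * tildeF d f Y := by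
        rw [← sum_filter, tildeF, mul_sum, powersetCard_eq_filter]

section DualRank

variable {ρ : Finset (Fin n) → ℕ}

lemma rank_univ_le_card_compl_add_rank (hρ0 : ρ ∅ = 0) (hρcard : ∀ X, ρ X ≤ X.card)
    (hsub : ∀ X Y, ρ (X ∪ Y) + ρ (X ∩ Y) ≤ ρ X + ρ Y) (C : Finset (Fin n)) :
    ρ univ ≤ (univ \ C).card + ρ C := by
  have h := hsub (univ \ C) C
  rw [sdiff_union_of_subset (subset_univ C), sdiff_inter_self, hρ0] at h
  have := hρcard (univ \ C)
  omega

lemma dualRank_univ_sub_dualRank_compl (hρ0 : ρ ∅ = 0) (hρcard : ∀ X, ρ X ≤ X.card)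
    (hsub : ∀ X Y, ρ (X ∪ Y) + ρ (X ∩ Y) ≤ ρ X + ρ Y) (C : Finset (Fin n)) :
    dualRank ρ univ - dualRank ρ (univ \ C) = C.card - ρ C := by
  have hcover := rank_univ_le_card_compl_add_rank hρ0 hρcard hsub C
  have hrank := hρcard C
  have hU : ρ univ ≤ n := by simpa using hρcard univ
  have hcard : (univ \ C).card = n - C.card := by rw [card_univ_sdiff, Fintype.card_fin]
  have hCn : C.card ≤ n := by simpa using card_le_univ C
  rw [dualRank, dualRank, Finset.sdiff_self, hρ0, Finset.sdiff_sdiff_eq_self (subset_univ C),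
    card_univ, Fintype.card_fin]
  omega

lemma card_compl_sub_dualRank_compl (hρ0 : ρ ∅ = 0) (hρcard : ∀ X, ρ X ≤ X.card)
    (hsub : ∀ X Y, ρ (X ∪ Y) + ρ (X ∩ Y) ≤ ρ X + ρ Y) (hmono : ∀ X Y, X ⊆ Y → ρ X ≤ ρ Y)
    (C : Finset (Fin n)) :
    (univ \ C).card - dualRank ρ (univ \ C) = ρ univ - ρ C := by
  have hcover := rank_univ_le_card_compl_add_rank hρ0 hρcard hsub C
  have hle := hmono C univ (subset_univ C)
  rw [dualRank, Finset.sdiff_sdiff_eq_self (subset_univ C)]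
  omega

end DualRank

end HarmonicTutte

open HarmonicTutte in
theorem stmt12_general {n : ℕ} (d : ℕ) (f : Finset (Fin n) → ℝ)
    (hf : IsHarmonic n d f) (ρ : Finset (Fin n) → ℕ)
    (hρ0 : ρ ∅ = 0)
    (hρcard : ∀ X, ρ X ≤ X.card)
    (hmono : ∀ X Y, X ⊆ Y → ρ X ≤ ρ Y)
    (hsub : ∀ X Y, ρ (X ∪ Y) + ρ (X ∩ Y) ≤ ρ X + ρ Y) :
    ∀ x y : ℝ,
      harmTutte (dualRank ρ) d f x y = (-1 : ℝ) ^ d * harmTutte ρ d f y x := by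
  intro x y
  have hcompl : Function.Involutive (fun X : Finset (Fin n) => univ \ X) :=
    fun X => Finset.sdiff_sdiff_eq_self (subset_univ X)
  rw [harmTutte, harmTutte, mul_sum, powerset_univ]
  refine (Fintype.sum_bijective _ hcompl.bijective _ _ fun C => ?_).symm
  rw [tildeF_univ_sdiff hf, dualRank_univ_sub_dualRank_compl hρ0 hρcard hsub,
    card_compl_sub_dualRank_compl hρ0 hρcard hsub hmono]
  ring

/-- For a matroid `M` on `E = {1,…,n}` with rank function `ρ` and `f ∈ Harm_d(n)` with
`d ≥ 1`, the harmonic Tutte polynomial satisfies `T(M*,f;x,y) = (-1)^d T(M,f;y,x)`. -/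
theorem stmt12 {n : ℕ} (d : ℕ) (hd : 1 ≤ d) (f : Finset (Fin n) → ℝ)
    (hf : IsHarmonic n d f) (ρ : Finset (Fin n) → ℕ)
    (hρ0 : ρ ∅ = 0)
    (hρcard : ∀ X, ρ X ≤ X.card)
    (hmono : ∀ X Y, X ⊆ Y → ρ X ≤ ρ Y)
    (hsub : ∀ X Y, ρ (X ∪ Y) + ρ (X ∩ Y) ≤ ρ X + ρ Y) :
    ∀ x y : ℝ,
      harmTutte (dualRank ρ) d f x y = (-1 : ℝ) ^ d * harmTutte ρ d f y x :=
  stmt12_general d f hf ρ hρ0 hρcard hmono hsub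
end
end

section
/- (Delsarte's characterization of designs) Let 0 ≤ t ≤ i ≤ n and let B be a collection of i-subsets of E = {1,...,n}. Then B is a t-design if and only if for every d with 1 ≤ d ≤ t and every f ∈ Harm_d(n), ∑_{B ∈ B} ∑_{A ∈ E_d, A ⊆ B} f(A) = 0. -/
/-!
Write `λ(A)` for the number of blocks containing `A`. Since all blocks have size `i`, double
counting gives the down relation `∑_{Z ⊃ A, #Z = #A + 1} λ(Z) = (i - #A) λ(A)`, and swapping
sums turns `∑_{B} ∑_{A ⊆ B, #A = d} f(A)` into `∑_{#A = d} λ(A) f(A)`.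

If `λ` is constant on `t`-sets, the down relation makes it constant on `d`-sets for every
`d ≤ t`, and a constant is orthogonal to `Harm_d(n)` because a harmonic `f` of degree `d ≥ 1`
has total sum zero. Conversely, if `λ ≡ c` on `d`-sets, the down relation shows that
`λ - (i - d) c / (n - d)` is harmonic on `(d + 1)`-sets; being orthogonal to `λ` and to the
constants, it is orthogonal to itself, hence zero.
-/

open Finset

noncomputable section
open scoped Classical

theorem Multiset.sum_map_ite_eq_countP_mul {β R : Type*} [NonAssocSemiring R] (p : β → Prop)
    [DecidablePred p] (c : R) (B : Multiset β) :
    (B.map fun X => if p X then c else 0).sum = B.countP p * c := by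
  induction B using Multiset.induction with
  | empty => simp
  | cons X B ih => by_cases h : p X <;> simp [h, ih, add_mul, add_comm]

section Counting

variable {α : Type*} [DecidableEq α]

theorem card_filter_powersetCard_succ_superset (Y X : Finset α) :
    #((X.powersetCard (#Y + 1)).filter (Y ⊆ ·)) = if Y ⊆ X then #X - #Y else 0 := by
  split_ifs with hYX
  · rw [card_filter_powersetCard_subset Y X _ hYX (by omega), add_tsub_cancel_left,
      Nat.choose_one_right]
  · rw [card_eq_zero, filter_eq_empty_iff]
    exact fun Z hZ hYZ => hYX (hYZ.trans (mem_powersetCard.1 hZ).1)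

variable [Fintype α]

theorem filter_powersetCard_univ_subset (k : ℕ) (X : Finset α) :
    (powersetCard k univ).filter (· ⊆ X) = powersetCard k X := by
  ext A
  simp [mem_powersetCard, and_comm]

theorem card_filter_powersetCard_univ_succ_superset (Y : Finset α) :
    #((powersetCard (#Y + 1) univ).filter (Y ⊆ ·)) = Fintype.card α - #Y := by
  rw [card_filter_powersetCard_succ_superset, if_pos (subset_univ Y), card_univ]

theorem sum_map_sum_powersetCard {R : Type*} [CommSemiring R] (d : ℕ) (g : Finset α → R)
    (B : Multiset (Finset α)) :
    (B.map fun X => ∑ A ∈ powersetCard d X, g A).sum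
      = ∑ A ∈ powersetCard d univ, (B.countP (A ⊆ ·) : R) * g A := by
  have hfilter (X : Finset α) :
      ∑ A ∈ powersetCard d X, g A = ∑ A ∈ powersetCard d univ, if A ⊆ X then g A else 0 := by
    rw [← sum_filter, filter_powersetCard_univ_subset]
  simp only [hfilter]
  exact (Multiset.sum_map_sum_map B (powersetCard d univ).val).trans
    (by simp only [Multiset.sum_map_ite_eq_countP_mul, ← sum_eq_multiset_sum])

theorem sum_countP_powersetCard_succ_superset {i : ℕ} {B : Multiset (Finset α)}
    (hB : ∀ X ∈ B, #X = i) (Y : Finset α) :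
    ∑ Z ∈ (powersetCard (#Y + 1) univ).filter (Y ⊆ ·), B.countP (Z ⊆ ·)
      = B.countP (Y ⊆ ·) * (i - #Y) := by
  have key := sum_map_sum_powersetCard (#Y + 1) (fun Z => if Y ⊆ Z then 1 else 0 : Finset α → ℕ) B
  simp only [sum_boole, card_filter_powersetCard_succ_superset, mul_ite, mul_one, mul_zero,
    ← sum_filter, Nat.cast_id] at key
  rw [← key, Multiset.map_congr rfl fun X hX => by rw [hB X hX],
    Multiset.sum_map_ite_eq_countP_mul (Y ⊆ ·), Nat.cast_id]

end Counting

def IsDesign {α : Type*} [DecidableEq α] (k : ℕ) (B : Multiset (Finset α)) : Prop :=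
  ∃ lam : ℕ, ∀ T : Finset α, #T = k → B.countP (T ⊆ ·) = lam

section Designs

variable {α : Type*} [DecidableEq α]

theorem isDesign_zero (B : Multiset (Finset α)) : IsDesign 0 B :=
  ⟨Multiset.card B, fun T hT => by
    rw [card_eq_zero.1 hT, Multiset.countP_eq_card]
    exact fun X _ => empty_subset X⟩

theorem isDesign_of_forall_cast_eq {k : ℕ} {B : Multiset (Finset α)} (c : ℝ)
    (h : ∀ T : Finset α, #T = k → (B.countP (T ⊆ ·) : ℝ) = c) : IsDesign k B := by
  by_cases hk : ∃ T : Finset α, #T = k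
  · obtain ⟨T₀, hT₀⟩ := hk
    exact ⟨B.countP (T₀ ⊆ ·), fun T hT => by exact_mod_cast (h T hT).trans (h T₀ hT₀).symm⟩
  · rw [not_exists] at hk
    exact ⟨0, fun T hT => absurd hT (hk T)⟩

variable [Fintype α] {i : ℕ} {B : Multiset (Finset α)}

theorem IsDesign.of_succ (hB : ∀ X ∈ B, #X = i) {k : ℕ} (hki : k < i)
    (h : IsDesign (k + 1) B) : IsDesign k B := by
  obtain ⟨c, hc⟩ := h
  refine ⟨(Fintype.card α - k) * c / (i - k), fun A hA => ?_⟩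
  have hdown := sum_countP_powersetCard_succ_superset hB A
  rw [sum_congr rfl fun Z hZ => hc Z (by rw [(mem_filter.1 hZ).1 |> mem_powersetCard.1 |>.2, hA]),
    sum_const, card_filter_powersetCard_univ_succ_superset, smul_eq_mul, hA] at hdown
  exact Nat.eq_div_of_mul_eq_right (by omega) (by rw [mul_comm, hdown])

theorem IsDesign.of_le (hB : ∀ X ∈ B, #X = i) {t k : ℕ} (hti : t ≤ i) (h : IsDesign t B)
    (hkt : k ≤ t) : IsDesign k B :=
  Nat.decreasingInduction (motive := fun k _ => IsDesign k B)
    (fun _ hk hsucc => hsucc.of_succ hB (by omega)) h hkt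

end Designs

theorem IsHarmonic.sum_eq_zero {n d : ℕ} {f : Finset (Fin n) → ℝ} (hf : IsHarmonic n d f)
    (hd : 1 ≤ d) : ∑ Z ∈ powersetCard d univ, f Z = 0 := by
  -- double counting the pairs `Y ⊂ Z` with `#Y + 1 = #Z = d`: each `Z` has `d` such `Y`
  have hdouble : ∑ Y ∈ powersetCard (d - 1) univ, ∑ Z ∈ (powersetCard d univ).filter (Y ⊆ ·), f Z
      = d * ∑ Z ∈ powersetCard d univ, f Z := by
    simp only [sum_filter]
    rw [sum_comm, mul_sum]
    refine sum_congr rfl fun Z hZ => ?_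
    rw [← sum_filter, filter_powersetCard_univ_subset, sum_const, card_powersetCard,
      (mem_powersetCard.1 hZ).2, Nat.choose_symm hd, Nat.choose_one_right, nsmul_eq_mul]
  have hzero : ∑ Y ∈ powersetCard (d - 1) univ,
      ∑ Z ∈ (powersetCard d univ).filter (Y ⊆ ·), f Z = 0 :=
    Finset.sum_eq_zero fun Y hY => hf Y (by rw [(mem_powersetCard.1 hY).2]; omega)
  rw [hdouble] at hzero
  exact (mul_eq_zero.1 hzero).resolve_left (by positivity)

theorem IsDesign.succ_of_forall_isHarmonic {n i k : ℕ} {B : Multiset (Finset (Fin n))}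
    (hB : ∀ X ∈ B, #X = i) (hkn : k < n) (hk : IsDesign k B)
    (horth : ∀ f, IsHarmonic n (k + 1) f →
      (B.map fun X => ∑ A ∈ powersetCard (k + 1) X, f A).sum = 0) :
    IsDesign (k + 1) B := by
  obtain ⟨c, hc⟩ := hk
  set c' : ℝ := (i - k : ℕ) * c / (n - k : ℕ)
  set M : Finset (Fin n) → ℝ := fun Z => B.countP (Z ⊆ ·) - c'
  have hM : IsHarmonic n (k + 1) M := by
    intro Y hY
    have hYk : #Y = k := by omega
    have hdown : ∑ Z ∈ (powersetCard (k + 1) univ).filter (Y ⊆ ·), (B.countP (Z ⊆ ·) : ℝ)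
        = c * (i - k : ℕ) := by
      rw [← hYk]
      exact_mod_cast (sum_countP_powersetCard_succ_superset hB Y).trans (by rw [hc Y hYk])
    have hcard : #((powersetCard (k + 1) univ).filter (Y ⊆ ·)) = n - k := by
      rw [← hYk, card_filter_powersetCard_univ_succ_superset, Fintype.card_fin]
    have hnk : ((n - k : ℕ) : ℝ) ≠ 0 := by exact_mod_cast (by omega : n - k ≠ 0)
    simp only [M, sum_sub_distrib, hdown, sum_const, hcard, nsmul_eq_mul, c']
    field_simp
    ring
  have hsq : ∑ Z ∈ powersetCard (k + 1) univ, M Z * M Z = 0 := by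
    have hcount := horth M hM
    rw [sum_map_sum_powersetCard] at hcount
    calc ∑ Z ∈ powersetCard (k + 1) univ, M Z * M Z
        = ∑ Z ∈ powersetCard (k + 1) univ, (B.countP (Z ⊆ ·) : ℝ) * M Z
          - c' * ∑ Z ∈ powersetCard (k + 1) univ, M Z := by
          rw [mul_sum, ← sum_sub_distrib]
          exact sum_congr rfl fun Z _ => by ring
      _ = 0 := by rw [hcount, hM.sum_eq_zero (by omega), mul_zero, sub_zero]
  refine isDesign_of_forall_cast_eq c' fun Z hZ => sub_eq_zero.1 (mul_self_eq_zero.1 ?_)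
  exact (sum_eq_zero_iff_of_nonneg fun Z _ => mul_self_nonneg (M Z)).1 hsq Z
    (mem_powersetCard.2 ⟨subset_univ Z, hZ⟩)

/-- Delsarte's characterization of designs: a collection `B` of `i`-subsets of `{1,…,n}`
(possibly with repeated blocks) is a `t`-design iff for every `1 ≤ d ≤ t` and every
`f ∈ Harm_d(n)`, `∑_{B ∈ B} ∑_{A ∈ E_d, A ⊆ B} f(A) = 0`. -/
theorem stmt19 (n t i : ℕ) (hti : t ≤ i) (hin : i ≤ n)
    (B : Multiset (Finset (Fin n))) (hB : ∀ X ∈ B, X.card = i) :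
    (∃ lam : ℕ, ∀ T : Finset (Fin n), T.card = t →
        Multiset.countP (fun X => T ⊆ X) B = lam) ↔
      ∀ d, 1 ≤ d → d ≤ t → ∀ f : Finset (Fin n) → ℝ, IsHarmonic n d f →
        (B.map (fun X => ∑ A ∈ Finset.powersetCard d X, f A)).sum = 0 := by
  constructor
  · intro hdesign d hd hdt f hf
    obtain ⟨c, hc⟩ := IsDesign.of_le hB hti hdesign hdt
    rw [sum_map_sum_powersetCard, sum_congr rfl fun A hA => by rw [hc A (mem_powersetCard.1 hA).2],
      ← mul_sum, hf.sum_eq_zero hd, mul_zero]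
  · intro horth
    have hlevels : ∀ d ≤ t, IsDesign d B := by
      intro d
      induction d with
      | zero => exact fun _ => isDesign_zero B
      | succ d ih =>
        exact fun hd => (ih (by omega)).succ_of_forall_isHarmonic hB (by omega)
          (horth (d + 1) (by omega) hd)
    exact hlevels t le_rfl
end
end
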